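/- Let q > 2, γ ∈ (0, γ_max), let t₀ ∈ (t₁, t₂) be the unique positive zero of f', and set β = −q(q−2)·t₀^{q/2−2} / (12·f(t₀)·f''(t₀)²). Then β < 0, H_β(t₀) = 0, H_β(t) ≤ 0 for t ∈ [t₁, t₀], H_β(t) ≥ 0 for t ∈ [t₀, t₂], and consequently (√(f(t))·f'(t)/Ψ(t)²)·H_β(t) ≤ 0 for all t ∈ [t₁, t₂]. -/

import Mathlib

open Real Set Filter MeasureTheory

noncomputable section

/-- `f(t) = t - γ·t^{q/2+1} - 1`. -/
def f (q γ : ℝ) : ℝ → ℝ := fun t => t - γ * t ^ (q / 2 + 1) - 1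

/-- `γ_max = (2/(q+2))·(1 + 2/q)^{-q/2}`. -/
def gammaMax (q : ℝ) : ℝ := 2 / (q + 2) * (1 + 2 / q) ^ (-(q / 2))

/-- The hypothesis that `t₁ γ < t₂ γ` are the two positive zeros of `f(q, γ, ·)`
for every `γ ∈ (0, γ_max)`. -/
def AreRoots (q : ℝ) (t₁ t₂ : ℝ → ℝ) : Prop :=
  ∀ γ ∈ Ioo 0 (gammaMax q),
    0 < t₁ γ ∧ t₁ γ < t₂ γ ∧ f q γ (t₁ γ) = 0 ∧ f q γ (t₂ γ) = 0 ∧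
      ∀ t, 0 < t → f q γ t = 0 → t = t₁ γ ∨ t = t₂ γ

/-- The hypothesis that `M γ = ∫_{t₁ γ}^{t₂ γ} dt/(t·√(f t))` for every `γ ∈ (0, γ_max)`. -/
def IsM (q : ℝ) (t₁ t₂ M : ℝ → ℝ) : Prop :=
  ∀ γ ∈ Ioo 0 (gammaMax q),
    M γ = ∫ t in (t₁ γ)..(t₂ γ), 1 / (t * Real.sqrt (f q γ t))

/-- `f' `. -/
def f1 (q γ : ℝ) : ℝ → ℝ := deriv (f q γ)

/-- `f''`. -/
def f2 (q γ : ℝ) : ℝ → ℝ := deriv (f1 q γ)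

/-- `f'''`. -/
def f3 (q γ : ℝ) : ℝ → ℝ := deriv (f2 q γ)

/-- `Ψ = f'² - 2ff''`. -/
def Psi (q γ : ℝ) : ℝ → ℝ := fun t => f1 q γ t ^ 2 - 2 * f q γ t * f2 q γ t

/-- `H_β = β(3f'²f'' + 2ff'f''' - 6ff''²) - q(q-2)t^{q/2-2}/2`. -/
def Hb (q γ β : ℝ) : ℝ → ℝ := fun t =>
  β * (3 * f1 q γ t ^ 2 * f2 q γ t + 2 * f q γ t * f1 q γ t * f3 q γ t -
      6 * f q γ t * f2 q γ t ^ 2) -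
    q * (q - 2) * t ^ (q / 2 - 2) / 2

/-- `S(t) = γ(q/2+1)t^{q/2}`, so that `f' = 1 - S` on `(0,∞)`. -/
def Saux (q γ t : ℝ) : ℝ := γ * (q / 2 + 1) * t ^ (q / 2)

/-- `K = 3t(1-S)² + 2(q/2-1)f(1-S) + 6(q/2)Sf`. -/
def Kaux (q γ t : ℝ) : ℝ :=
  3 * t * (1 - Saux q γ t) ^ 2 + 2 * (q / 2 - 1) * f q γ t * (1 - Saux q γ t) +
    6 * (q / 2) * (Saux q γ t) * f q γ t

lemma f_hasDeriv (q γ : ℝ) {t : ℝ} (ht : 0 < t) :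
    HasDerivAt (f q γ) (1 - Saux q γ t) t := by
  have h1 : HasDerivAt (fun u : ℝ => u ^ (q / 2 + 1)) ((q / 2 + 1) * t ^ (q / 2 + 1 - 1)) t :=
    Real.hasDerivAt_rpow_const (Or.inl ht.ne')
  have h2 : HasDerivAt (f q γ) (1 - γ * ((q / 2 + 1) * t ^ (q / 2 + 1 - 1))) t :=
    ((hasDerivAt_id t).sub (h1.const_mul γ)).sub_const 1
  convert h2 using 2
  rw [show q / 2 + 1 - 1 = q / 2 by ring, Saux]; ring

lemma Saux_hasDeriv (q γ : ℝ) {t : ℝ} (ht : 0 < t) :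
    HasDerivAt (Saux q γ) (γ * (q / 2 + 1) * ((q / 2) * t ^ (q / 2 - 1))) t := by
  have h1 : HasDerivAt (fun u : ℝ => u ^ (q / 2)) ((q / 2) * t ^ (q / 2 - 1)) t :=
    Real.hasDerivAt_rpow_const (Or.inl ht.ne')
  exact h1.const_mul _

lemma f1_eq (q γ : ℝ) {t : ℝ} (ht : 0 < t) : f1 q γ t = 1 - Saux q γ t :=
  (f_hasDeriv q γ ht).deriv

lemma f1_eventually (q γ : ℝ) {t : ℝ} (ht : 0 < t) :
    f1 q γ =ᶠ[nhds t] fun u => 1 - Saux q γ u :=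
  Filter.eventuallyEq_of_mem (isOpen_Ioi.mem_nhds ht) (fun x hx => f1_eq q γ hx)

lemma f2_eq (q γ : ℝ) {t : ℝ} (ht : 0 < t) :
    f2 q γ t = -(γ * (q / 2 + 1) * ((q / 2) * t ^ (q / 2 - 1))) := by
  rw [f2, (f1_eventually q γ ht).deriv_eq]
  exact ((Saux_hasDeriv q γ ht).const_sub 1).deriv

lemma f2_eventually (q γ : ℝ) {t : ℝ} (ht : 0 < t) :
    f2 q γ =ᶠ[nhds t] fun u => -(γ * (q / 2 + 1) * ((q / 2) * u ^ (q / 2 - 1))) :=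
  Filter.eventuallyEq_of_mem (isOpen_Ioi.mem_nhds ht) (fun x hx => f2_eq q γ hx)

lemma f3_eq (q γ : ℝ) {t : ℝ} (ht : 0 < t) :
    f3 q γ t = -(γ * (q / 2 + 1) * ((q / 2) * ((q / 2 - 1) * t ^ (q / 2 - 2)))) := by
  rw [f3, (f2_eventually q γ ht).deriv_eq]
  have h1 : HasDerivAt (fun u : ℝ => u ^ (q / 2 - 1)) ((q / 2 - 1) * t ^ (q / 2 - 1 - 1)) t :=
    Real.hasDerivAt_rpow_const (Or.inl ht.ne')
  have h2 := (((h1.const_mul (q / 2)).const_mul (γ * (q / 2 + 1))).neg).deriv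
  rw [show q / 2 - 1 - 1 = q / 2 - 2 by ring] at h2
  exact h2

lemma Kaux_hasDeriv (q γ : ℝ) {t : ℝ} (ht : 0 < t) :
    HasDerivAt (Kaux q γ)
      ((q + 1) * ((1 - Saux q γ t) ^ 2 + q * Saux q γ t * f q γ t / t)) t := by
  have hS := Saux_hasDeriv q γ ht
  have hF := f_hasDeriv q γ ht
  have h1 : HasDerivAt (fun u => 1 - Saux q γ u)
      (-(γ * (q / 2 + 1) * ((q / 2) * t ^ (q / 2 - 1)))) t := hS.const_sub 1
  have h : HasDerivAt (Kaux q γ) _ t := (((((hasDerivAt_id t).const_mul 3).mul (h1.pow 2)).add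
      ((hF.const_mul (2 * (q / 2 - 1))).mul h1)).add
        ((hS.const_mul (6 * (q / 2))).mul hF))
  convert h using 1
  have hr : t ^ (q / 2 - 1) = t ^ (q / 2) / t := by
    rw [Real.rpow_sub ht, Real.rpow_one]
  simp only [Saux, id_eq, hr]
  norm_num
  field_simp
  ring

set_option maxHeartbeats 1000000 in
lemma Hb_eq (q γ β F₀ : ℝ) (hγ : γ ≠ 0) (hp : q / 2 + 1 ≠ 0) (hq2 : q / 2 ≠ 0) (hF : F₀ ≠ 0)
    (hβ : β = -(q * (q - 2)) / (12 * γ * (q / 2 + 1) * (q / 2) ^ 2 * F₀)) {t : ℝ} (ht : 0 < t) :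
    Hb q γ β t = q * (q - 2) * Saux q γ t / (12 * γ * (q / 2 + 1) * (q / 2) * F₀ * t ^ 2) *
      (Kaux q γ t - 6 * (q / 2) * F₀) := by
  have e1 : t ^ (q / 2 - 1) = t ^ (q / 2 - 2) * t := by
    rw [show q / 2 - 1 = q / 2 - 2 + 1 by ring, Real.rpow_add ht, Real.rpow_one]
  have e2 : t ^ (q / 2) = t ^ (q / 2 - 2) * t ^ 2 := by
    rw [show t ^ (2 : ℕ) = t ^ ((2 : ℕ) : ℝ) from (Real.rpow_natCast t 2).symm,
      ← Real.rpow_add ht]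
    congr 1
    push_cast; ring
  have e3 : t ^ (q / 2 + 1) = t ^ (q / 2 - 2) * t ^ 3 := by
    rw [show t ^ (3 : ℕ) = t ^ ((3 : ℕ) : ℝ) from (Real.rpow_natCast t 3).symm,
      ← Real.rpow_add ht]
    congr 1
    push_cast; ring
  have hD0 : (12 * γ * (q / 2 + 1) * (q / 2) ^ 2 * F₀) ≠ 0 :=
    mul_ne_zero (mul_ne_zero (mul_ne_zero (mul_ne_zero (by norm_num) hγ) hp)
      (pow_ne_zero 2 hq2)) hF
  have hβm : β * (12 * γ * (q / 2 + 1) * (q / 2) ^ 2 * F₀) = -(q * (q - 2)) := by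
    rw [hβ, div_mul_cancel₀ _ hD0]
  have hD2 : (12 * γ * (q / 2 + 1) * (q / 2) * F₀ * t ^ 2) ≠ 0 :=
    mul_ne_zero (mul_ne_zero (mul_ne_zero (mul_ne_zero (mul_ne_zero (by norm_num) hγ) hp)
      hq2) hF) (pow_ne_zero 2 ht.ne')
  rw [div_mul_eq_mul_div, eq_div_iff hD2]
  apply mul_right_cancel₀ hq2
  simp only [Hb]
  rw [f1_eq q γ ht, f2_eq q γ ht, f3_eq q γ ht]
  simp only [Kaux, Saux, f]
  rw [e1, e2, e3]
  linear_combination ((3 * (1 - γ * (q / 2 + 1) * (t ^ (q / 2 - 2) * t ^ 2)) ^ 2 *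
      (-(γ * (q / 2 + 1) * ((q / 2) * (t ^ (q / 2 - 2) * t)))) +
    2 * (t - γ * (t ^ (q / 2 - 2) * t ^ 3) - 1) *
      (1 - γ * (q / 2 + 1) * (t ^ (q / 2 - 2) * t ^ 2)) *
      (-(γ * (q / 2 + 1) * ((q / 2) * ((q / 2 - 1) * t ^ (q / 2 - 2))))) -
    6 * (t - γ * (t ^ (q / 2 - 2) * t ^ 3) - 1) *
      (γ * (q / 2 + 1) * ((q / 2) * (t ^ (q / 2 - 2) * t))) ^ 2) * t ^ 2) * hβm

/-- For `q > 2`, `γ ∈ (0, γ_max)`, the zeros `t₁ < t₂` of `f`, the unique positive zero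
`t₀ ∈ (t₁, t₂)` of `f'`, and `β = -q(q-2)t₀^{q/2-2}/(12f(t₀)f''(t₀)²)`:
`β < 0`, `H_β(t₀) = 0`, `H_β ≤ 0` on `[t₁, t₀]`, `H_β ≥ 0` on `[t₀, t₂]`, and hence
`(√f·f'/Ψ²)·H_β ≤ 0` on `[t₁, t₂]`. -/
theorem H_sign (q γ t₀ β : ℝ) (hq : 2 < q) (hγ : γ ∈ Ioo 0 (gammaMax q))
    (t₁ t₂ : ℝ) (ht₁ : 0 < t₁) (h₁₂ : t₁ < t₂)
    (hz₁ : f q γ t₁ = 0) (hz₂ : f q γ t₂ = 0)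
    (huniq : ∀ t, 0 < t → f q γ t = 0 → t = t₁ ∨ t = t₂)
    (ht₀ : t₀ ∈ Ioo t₁ t₂) (hz₀ : f1 q γ t₀ = 0)
    (huniq₀ : ∀ t, 0 < t → f1 q γ t = 0 → t = t₀)
    (hβ : β = -(q * (q - 2) * t₀ ^ (q / 2 - 2)) / (12 * f q γ t₀ * f2 q γ t₀ ^ 2)) :
    β < 0 ∧ Hb q γ β t₀ = 0 ∧
    (∀ t ∈ Icc t₁ t₀, Hb q γ β t ≤ 0) ∧
    (∀ t ∈ Icc t₀ t₂, 0 ≤ Hb q γ β t) ∧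
    ∀ t ∈ Icc t₁ t₂, Real.sqrt (f q γ t) * f1 q γ t / Psi q γ t ^ 2 * Hb q γ β t ≤ 0 := by
  obtain ⟨hγ0, hγmax⟩ := hγ
  have hq2 : (0:ℝ) < q / 2 := by linarith
  have hp : (0:ℝ) < q / 2 + 1 := by linarith
  have ht₀1 : t₁ < t₀ := ht₀.1
  have ht₀2 : t₀ < t₂ := ht₀.2
  have ht₀p : 0 < t₀ := lt_trans ht₁ ht₀1
  have hS₀ : Saux q γ t₀ = 1 := by
    have h := f1_eq q γ ht₀p
    rw [hz₀] at h; linarith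
  have hSlt : ∀ a b : ℝ, 0 ≤ a → a < b → Saux q γ a < Saux q γ b := by
    intro a b ha hab
    exact mul_lt_mul_of_pos_left (Real.rpow_lt_rpow ha hab hq2) (mul_pos hγ0 hp)
  have hSle : ∀ a b : ℝ, 0 ≤ a → a ≤ b → Saux q γ a ≤ Saux q γ b := by
    intro a b ha hab
    exact mul_le_mul_of_nonneg_left (Real.rpow_le_rpow ha hab hq2.le) (mul_pos hγ0 hp).le
  have hcont : ∀ a b : ℝ, 0 < a → ContinuousOn (f q γ) (Icc a b) := by
    intro a b ha x hx
    exact ((f_hasDeriv q γ (lt_of_lt_of_le ha hx.1)).continuousAt).continuousWithinAt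
  have hmono : StrictMonoOn (f q γ) (Icc t₁ t₀) := by
    apply strictMonoOn_of_deriv_pos (convex_Icc _ _) (hcont _ _ ht₁)
    intro x hx
    rw [interior_Icc] at hx
    have hxp : 0 < x := lt_trans ht₁ hx.1
    show 0 < f1 q γ x
    rw [f1_eq q γ hxp]
    have h := hSlt x t₀ hxp.le hx.2
    rw [hS₀] at h; linarith
  have hanti : StrictAntiOn (f q γ) (Icc t₀ t₂) := by
    apply strictAntiOn_of_deriv_neg (convex_Icc _ _) (hcont _ _ ht₀p)
    intro x hx
    rw [interior_Icc] at hx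
    have hxp : 0 < x := lt_trans ht₀p hx.1
    show f1 q γ x < 0
    rw [f1_eq q γ hxp]
    have h := hSlt t₀ x ht₀p.le hx.1
    rw [hS₀] at h; linarith
  have hF₀ : 0 < f q γ t₀ := by
    have h := hmono (left_mem_Icc.mpr ht₀1.le) (right_mem_Icc.mpr ht₀1.le) ht₀1
    rwa [hz₁] at h
  have hfnn : ∀ x ∈ Icc t₁ t₂, 0 ≤ f q γ x := by
    intro x hx
    rcases le_total x t₀ with h | h
    · rcases eq_or_lt_of_le hx.1 with h1 | h1
      · rw [← h1, hz₁]
      · have h2 := hmono (left_mem_Icc.mpr (le_trans hx.1 h)) ⟨hx.1, h⟩ h1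
        rw [hz₁] at h2; linarith
    · rcases eq_or_lt_of_le hx.2 with h2 | h2
      · rw [h2, hz₂]
      · have h3 := hanti ⟨h, hx.2⟩ (right_mem_Icc.mpr (le_trans h hx.2)) h2
        rw [hz₂] at h3; linarith
  have hβval : β = -(q * (q - 2)) / (12 * γ * (q / 2 + 1) * (q / 2) ^ 2 * f q γ t₀) := by
    have hT : t₀ ^ (q / 2) = 1 / (γ * (q / 2 + 1)) := by
      have h := hS₀
      rw [Saux] at h
      field_simp at h ⊢
      linarith
    have e2 : t₀ ^ (q / 2 - 1) = t₀ ^ (q / 2) / t₀ := by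
      rw [Real.rpow_sub ht₀p, Real.rpow_one]
    have e3 : t₀ ^ (q / 2 - 2) = t₀ ^ (q / 2) / t₀ ^ 2 := by
      rw [show t₀ ^ (2 : ℕ) = t₀ ^ ((2 : ℕ) : ℝ) from (Real.rpow_natCast t₀ 2).symm,
        ← Real.rpow_sub ht₀p]
      norm_num
    rw [hβ, f2_eq q γ ht₀p, e2, e3, hT]
    field_simp
  have hHb : ∀ x : ℝ, 0 < x → Hb q γ β x =
      q * (q - 2) * Saux q γ x / (12 * γ * (q / 2 + 1) * (q / 2) * f q γ t₀ * x ^ 2) *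
        (Kaux q γ x - 6 * (q / 2) * f q γ t₀) :=
    fun x hx => Hb_eq q γ β (f q γ t₀) hγ0.ne' hp.ne' hq2.ne' hF₀.ne' hβval hx
  have hCpos : ∀ x : ℝ, 0 < x →
      0 < q * (q - 2) * Saux q γ x / (12 * γ * (q / 2 + 1) * (q / 2) * f q γ t₀ * x ^ 2) := by
    intro x hx
    apply div_pos
    · exact mul_pos (mul_pos (by linarith) (by linarith))
        (mul_pos (mul_pos hγ0 hp) (Real.rpow_pos_of_pos hx _))
    · exact mul_pos (mul_pos (mul_pos (mul_pos (mul_pos (by norm_num) hγ0) hp) hq2) hF₀)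
        (pow_pos hx 2)
  have hK₀ : Kaux q γ t₀ = 6 * (q / 2) * f q γ t₀ := by
    simp only [Kaux, hS₀]; ring
  have ht₀mem : t₀ ∈ Icc t₁ t₂ := ⟨ht₀1.le, ht₀2.le⟩
  have hKmono : MonotoneOn (Kaux q γ) (Icc t₁ t₂) := by
    apply monotoneOn_of_deriv_nonneg (convex_Icc _ _)
    · intro x hx
      exact (Kaux_hasDeriv q γ (lt_of_lt_of_le ht₁ hx.1)).continuousAt.continuousWithinAt
    · intro x hx
      rw [interior_Icc] at hx
      exact (Kaux_hasDeriv q γ (lt_trans ht₁ hx.1)).differentiableAt.differentiableWithinAt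
    · intro x hx
      rw [interior_Icc] at hx
      have hxp : 0 < x := lt_trans ht₁ hx.1
      rw [(Kaux_hasDeriv q γ hxp).deriv]
      have hfx : 0 ≤ f q γ x := hfnn x ⟨hx.1.le, hx.2.le⟩
      have hSx : 0 < Saux q γ x :=
        mul_pos (mul_pos hγ0 hp) (Real.rpow_pos_of_pos hxp _)
      have h1 : 0 ≤ q * Saux q γ x * f q γ x / x :=
        div_nonneg (mul_nonneg (mul_nonneg (by linarith) hSx.le) hfx) hxp.le
      have h2 : 0 ≤ (1 - Saux q γ x) ^ 2 := sq_nonneg _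
      have h3 : (0:ℝ) ≤ q + 1 := by linarith
      exact mul_nonneg h3 (by linarith)
  have part1 : β < 0 := by
    rw [hβval]
    apply div_neg_of_neg_of_pos
    · nlinarith
    · exact mul_pos (mul_pos (mul_pos (mul_pos (by norm_num) hγ0) hp) (pow_pos hq2 2)) hF₀
  have part2 : Hb q γ β t₀ = 0 := by
    rw [hHb t₀ ht₀p, hK₀]; ring
  have part3 : ∀ t ∈ Icc t₁ t₀, Hb q γ β t ≤ 0 := by
    intro x hx
    have hxp : 0 < x := lt_of_lt_of_le ht₁ hx.1
    rw [hHb x hxp]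
    refine mul_nonpos_iff.mpr (Or.inl ⟨(hCpos x hxp).le, ?_⟩)
    have h := hKmono ⟨hx.1, le_trans hx.2 ht₀2.le⟩ ht₀mem hx.2
    rw [hK₀] at h; linarith
  have part4 : ∀ t ∈ Icc t₀ t₂, 0 ≤ Hb q γ β t := by
    intro x hx
    have hxp : 0 < x := lt_of_lt_of_le ht₀p hx.1
    rw [hHb x hxp]
    apply mul_nonneg (hCpos x hxp).le
    have h := hKmono ht₀mem ⟨le_trans ht₀1.le hx.1, hx.2⟩ hx.1
    rw [hK₀] at h; linarith
  refine ⟨part1, part2, part3, part4, ?_⟩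
  intro x hx
  rcases le_total x t₀ with h | h
  · have hxp : 0 < x := lt_of_lt_of_le ht₁ hx.1
    have hf1 : 0 ≤ f1 q γ x := by
      rw [f1_eq q γ hxp]
      have h2 := hSle x t₀ hxp.le h
      rw [hS₀] at h2; linarith
    have hA : 0 ≤ Real.sqrt (f q γ x) * f1 q γ x / Psi q γ x ^ 2 :=
      div_nonneg (mul_nonneg (Real.sqrt_nonneg _) hf1) (sq_nonneg _)
    exact mul_nonpos_iff.mpr (Or.inl ⟨hA, part3 x ⟨hx.1, h⟩⟩)
  · have hxp : 0 < x := lt_of_lt_of_le ht₀p h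
    have hf1 : f1 q γ x ≤ 0 := by
      rw [f1_eq q γ hxp]
      have h2 := hSle t₀ x ht₀p.le h
      rw [hS₀] at h2; linarith
    have hA : Real.sqrt (f q γ x) * f1 q γ x / Psi q γ x ^ 2 ≤ 0 :=
      div_nonpos_of_nonpos_of_nonneg
        (mul_nonpos_iff.mpr (Or.inl ⟨Real.sqrt_nonneg _, hf1⟩)) (sq_nonneg _)
    exact mul_nonpos_iff.mpr (Or.inr ⟨hA, part4 x ⟨h, hx.2⟩⟩)
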